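/- arXiv:1509.05502 — 2 statements merged into one kernel-verified Lean document; each statement's English description precedes it below -/
import Mathlib

section
/- Suppose 𝒴 = 𝒳 and let β' be the identity receiver policy, β'(x̂,y) = 1 if x̂ = y and 0 otherwise. For α ∈ A and β ∈ B define the composed policy γ(x̂,z,w) = ∑_{y} β(x̂,y)·α(y,z,w). Then γ ∈ A, ξ(γ,β') = ξ(α,β), and ζ(γ) ≤ ζ(α) (a data-processing inequality: post-processing the message at the receiver cannot increase the information leaked about W). -/
open Finset

noncomputable section

variable {X W Y : Type*} [Fintype X] [Fintype W] [Fintype Y]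

/-- The set `A` of sender policies: conditional distributions of `Y` given `(Z, W)`. -/
def senderSet (X W Y : Type*) [Fintype X] [Fintype W] [Fintype Y] :
    Set (Y × X × W → ℝ) :=
  {α | (∀ t, 0 ≤ α t ∧ α t ≤ 1) ∧ ∀ z w, ∑ y, α (y, z, w) = 1}

/-- The set `B` of receiver policies: conditional distributions of `X̂` given `Y`. -/
def receiverSet (X Y : Type*) [Fintype X] [Fintype Y] : Set (X × Y → ℝ) :=
  {β | (∀ t, 0 ≤ β t ∧ β t ≤ 1) ∧ ∀ y, ∑ x, β (x, y) = 1}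

/-- Expected distortion `ξ(α, β) = E{d(X, X̂)}`. -/
def xi (d : X × X → ℝ) (p : X × X × W → ℝ) (α : Y × X × W → ℝ) (β : X × Y → ℝ) : ℝ :=
  ∑ x, ∑ x', ∑ y, ∑ z, ∑ w, d (x, x') * β (x', y) * α (y, z, w) * p (x, z, w)

/-- Joint distribution `P_α(y, w)` of `(Y, W)` induced by the sender policy `α`. -/
def Pyw (p : X × X × W → ℝ) (α : Y × X × W → ℝ) (y : Y) (w : W) : ℝ :=
  ∑ z, ∑ x, α (y, z, w) * p (x, z, w)

/-- Marginal distribution `P_α(y)` of `Y` induced by the sender policy `α`. -/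
def Py (p : X × X × W → ℝ) (α : Y × X × W → ℝ) (y : Y) : ℝ :=
  ∑ w, Pyw p α y w

/-- Marginal distribution `q(w)` of the private information `W`. -/
def qW (p : X × X × W → ℝ) (w : W) : ℝ := ∑ z, ∑ x, p (x, z, w)

/-- Mutual information `ζ(α) = I(Y; W)`.  Summands with `P_α(y, w) = 0` automatically
vanish since they are multiplied by `P_α(y, w) = 0`. -/
def zeta (p : X × X × W → ℝ) (α : Y × X × W → ℝ) : ℝ :=
  ∑ y, ∑ w, Pyw p α y w * Real.log (Pyw p α y w / (Py p α y * qW p w))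

/-- Sender cost `U(α, β) = ξ(α, β) + ρ ζ(α)`. -/
def Ucost (d : X × X → ℝ) (p : X × X × W → ℝ) (ρ : ℝ)
    (α : Y × X × W → ℝ) (β : X × Y → ℝ) : ℝ :=
  xi d p α β + ρ * zeta p α

/-- Receiver cost `V(α, β) = ξ(α, β)`. -/
def Vcost (d : X × X → ℝ) (p : X × X × W → ℝ)
    (α : Y × X × W → ℝ) (β : X × Y → ℝ) : ℝ :=
  xi d p α β

/-- Potential function `Ψ(α, β) = ξ(α, β) + ρ ζ(α)`. -/
def Psi (d : X × X → ℝ) (p : X × X × W → ℝ) (ρ : ℝ)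
    (α : Y × X × W → ℝ) (β : X × Y → ℝ) : ℝ :=
  xi d p α β + ρ * zeta p α

/-- `(α, β)` is a Nash equilibrium of the privacy game. -/
def IsNash (d : X × X → ℝ) (p : X × X × W → ℝ) (ρ : ℝ)
    (α : Y × X × W → ℝ) (β : X × Y → ℝ) : Prop :=
  α ∈ senderSet X W Y ∧ β ∈ receiverSet X Y ∧
    (∀ α' ∈ senderSet X W Y, Ucost d p ρ α β ≤ Ucost d p ρ α' β) ∧
    (∀ β' ∈ receiverSet X Y, Vcost d p α β ≤ Vcost d p α β')

/-- `(α, β)` is an `ε`-Nash equilibrium of the privacy game. -/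
def IsEpsNash (d : X × X → ℝ) (p : X × X × W → ℝ) (ρ ε : ℝ)
    (α : Y × X × W → ℝ) (β : X × Y → ℝ) : Prop :=
  α ∈ senderSet X W Y ∧ β ∈ receiverSet X Y ∧
    (∀ α' ∈ senderSet X W Y, Ucost d p ρ α β ≤ Ucost d p ρ α' β + ε) ∧
    (∀ β' ∈ receiverSet X Y, Vcost d p α β ≤ Vcost d p α β' + ε)

end

/-!
Composing with `β` transforms, for every `w`, both the column `P_α(·, w)` and the product
`P_α(·) q(w)` by the same column-stochastic matrix, so `ζ(γ) ≤ ζ(α)` is the data-processing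
inequality for (unnormalised) relative entropy.  That inequality follows row by row from the
log-sum inequality, itself a consequence of `log x ≥ 1 - 1/x`.  The distortion identity is a
reindexing of sums: the identity receiver simply reads off `γ`.
-/

open Real

lemma sub_le_mul_log_div {a b : ℝ} (ha : 0 ≤ a) (hb : 0 ≤ b) (hab : b = 0 → a = 0) :
    a - b ≤ a * log (a / b) := by
  rcases ha.eq_or_lt with rfl | ha
  · simpa using hb
  have hb : 0 < b := hb.lt_of_ne fun h => ha.ne' (hab h.symm)
  calc a - b = a * (1 - (a / b)⁻¹) := by field_simp
    _ ≤ a * log (a / b) :=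
      mul_le_mul_of_nonneg_left (one_sub_inv_le_log_of_pos (div_pos ha hb)) ha.le

theorem sum_mul_log_sum_div_sum_le {ι : Type*} (s : Finset ι) (a b : ι → ℝ)
    (ha : ∀ i ∈ s, 0 ≤ a i) (hb : ∀ i ∈ s, 0 ≤ b i) (hab : ∀ i ∈ s, b i = 0 → a i = 0) :
    (∑ i ∈ s, a i) * log ((∑ i ∈ s, a i) / ∑ i ∈ s, b i) ≤
      ∑ i ∈ s, a i * log (a i / b i) := by
  rcases (sum_nonneg ha).eq_or_lt with hA | hA
  · rw [← hA, zero_mul]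
    refine sum_nonneg fun i hi => ?_
    simp [(sum_eq_zero_iff_of_nonneg ha).1 hA.symm i hi]
  set A := ∑ i ∈ s, a i
  set B := ∑ i ∈ s, b i
  have hB : 0 < B := (sum_nonneg hb).lt_of_ne fun hB => hA.ne' <|
    sum_eq_zero fun i hi => hab i hi ((sum_eq_zero_iff_of_nonneg hb).1 hB.symm i hi)
  set C := A / B
  have hC : 0 < C := div_pos hA hB
  -- Compare each `a i` with the rescaled `b i * C`, whose total mass is exactly `A`.
  have term : ∀ i ∈ s, a i - b i * C ≤ a i * log (a i / b i) - a i * log C := by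
    intro i hi
    have key := sub_le_mul_log_div (ha i hi) (mul_nonneg (hb i hi) hC.le)
      fun h => hab i hi <| (mul_eq_zero.1 h).resolve_right hC.ne'
    by_cases hai : a i = 0
    · simpa [hai] using key
    have hbi : b i ≠ 0 := fun h => hai (hab i hi h)
    rwa [← div_div, log_div (div_ne_zero hai hbi) hC.ne', mul_sub] at key
  have hBC : B * C = A := mul_div_cancel₀ A hB.ne'
  have := sum_le_sum term
  rw [sum_sub_distrib, sum_sub_distrib, ← sum_mul, ← sum_mul, hBC, sub_self] at this
  linarith

section Divergence

variable {ι κ : Type*} [Fintype ι]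

noncomputable def divergence (a b : ι → ℝ) : ℝ := ∑ i, a i * log (a i / b i)

def pushforward (β : κ × ι → ℝ) (a : ι → ℝ) : κ → ℝ := fun k => ∑ i, β (k, i) * a i

lemma sum_pushforward [Fintype κ] {β : κ × ι → ℝ} (hβ : ∀ i, ∑ k, β (k, i) = 1) (a : ι → ℝ) :
    ∑ k, pushforward β a k = ∑ i, a i := by
  simp only [pushforward]
  rw [sum_comm]
  simp [← sum_mul, hβ]

lemma pushforward_mul_const (β : κ × ι → ℝ) (a : ι → ℝ) (c : ℝ) (k : κ) :
    pushforward β (fun i => a i * c) k = pushforward β a k * c := by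
  simp only [pushforward, sum_mul, mul_assoc]

theorem divergence_pushforward_le [Fintype κ] {β : κ × ι → ℝ} (hβ0 : ∀ t, 0 ≤ β t)
    (hβ1 : ∀ i, ∑ k, β (k, i) = 1) {a b : ι → ℝ} (ha : ∀ i, 0 ≤ a i) (hb : ∀ i, 0 ≤ b i)
    (hab : ∀ i, b i = 0 → a i = 0) :
    divergence (pushforward β a) (pushforward β b) ≤ divergence a b := by
  have row : ∀ k, pushforward β a k * log (pushforward β a k / pushforward β b k) ≤
      pushforward β (fun i => a i * log (a i / b i)) k := by
    intro k
    refine (sum_mul_log_sum_div_sum_le univ _ _ (fun i _ => mul_nonneg (hβ0 _) (ha i))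
      (fun i _ => mul_nonneg (hβ0 _) (hb i))
      fun i _ h => by simp [(mul_eq_zero.1 h).imp_right (hab i)]).trans_eq ?_
    refine sum_congr rfl fun i _ => ?_
    rcases eq_or_ne (β (k, i)) 0 with h | h
    · simp [h]
    · rw [mul_div_mul_left _ _ h, mul_assoc]
  calc divergence (pushforward β a) (pushforward β b)
      ≤ ∑ k, pushforward β (fun i => a i * log (a i / b i)) k := sum_le_sum fun k _ => row k
    _ = divergence a b := sum_pushforward hβ1 _

end Divergence

section Marginals

variable {X W Y : Type*} [Fintype X] {p : X × X × W → ℝ} {α : Y × X × W → ℝ}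

lemma Pyw_nonneg (hp : ∀ t, 0 ≤ p t) (hα : ∀ t, 0 ≤ α t) (y : Y) (w : W) :
    0 ≤ Pyw p α y w :=
  sum_nonneg fun _ _ => sum_nonneg fun _ _ => mul_nonneg (hα _) (hp _)

lemma Py_nonneg [Fintype W] (hp : ∀ t, 0 ≤ p t) (hα : ∀ t, 0 ≤ α t) (y : Y) :
    0 ≤ Py p α y :=
  sum_nonneg fun w _ => Pyw_nonneg hp hα y w

lemma qW_nonneg (hp : ∀ t, 0 ≤ p t) (w : W) : 0 ≤ qW p w :=
  sum_nonneg fun _ _ => sum_nonneg fun _ _ => hp _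

lemma Pyw_le_Py [Fintype W] (hp : ∀ t, 0 ≤ p t) (hα : ∀ t, 0 ≤ α t) (y : Y) (w : W) :
    Pyw p α y w ≤ Py p α y :=
  single_le_sum (fun w _ => Pyw_nonneg hp hα y w) (mem_univ w)

lemma Pyw_le_qW (hp : ∀ t, 0 ≤ p t) (hα : ∀ t, α t ≤ 1) (y : Y) (w : W) :
    Pyw p α y w ≤ qW p w :=
  sum_le_sum fun _ _ => sum_le_sum fun _ _ => mul_le_of_le_one_left (hp _) (hα _)

lemma zeta_eq_sum_divergence [Fintype W] [Fintype Y] (p : X × X × W → ℝ)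
    (α : Y × X × W → ℝ) :
    zeta p α = ∑ w, divergence (fun y => Pyw p α y w) (fun y => Py p α y * qW p w) :=
  sum_comm

end Marginals

section Composition

variable {X W Y Y' : Type*} [Fintype X] [Fintype Y]

def composePolicy (β : Y' × Y → ℝ) (α : Y × X × W → ℝ) : Y' × X × W → ℝ :=
  fun t => pushforward β (fun y => α (y, t.2)) t.1

lemma composePolicy_mem_senderSet [Fintype W] [Fintype Y'] {α : Y × X × W → ℝ}
    {β : Y' × Y → ℝ} (hα : α ∈ senderSet X W Y) (hβ : β ∈ receiverSet Y' Y) :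
    composePolicy β α ∈ senderSet X W Y' := by
  refine ⟨fun t => ⟨sum_nonneg fun y _ => mul_nonneg (hβ.1 _).1 (hα.1 _).1, ?_⟩,
    fun z w => (sum_pushforward hβ.2 _).trans (hα.2 z w)⟩
  calc composePolicy β α t ≤ ∑ y, α (y, t.2) :=
        sum_le_sum fun y _ => mul_le_of_le_one_left (hα.1 _).1 (hβ.1 _).2
    _ = 1 := hα.2 t.2.1 t.2.2

lemma Pyw_composePolicy (p : X × X × W → ℝ) (α : Y × X × W → ℝ) (β : Y' × Y → ℝ)
    (y' : Y') (w : W) :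
    Pyw p (composePolicy β α) y' w = pushforward β (fun y => Pyw p α y w) y' := by
  simp only [Pyw, composePolicy, pushforward, sum_mul, mul_sum, mul_assoc]
  exact (sum_congr rfl fun _ _ => sum_comm).trans sum_comm

lemma Py_composePolicy [Fintype W] (p : X × X × W → ℝ) (α : Y × X × W → ℝ)
    (β : Y' × Y → ℝ) (y' : Y') :
    Py p (composePolicy β α) y' = pushforward β (Py p α) y' := by
  simp only [Py, Pyw_composePolicy, pushforward, mul_sum]
  exact sum_comm

theorem zeta_composePolicy_le [Fintype W] [Fintype Y'] {p : X × X × W → ℝ}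
    (hp : ∀ t, 0 ≤ p t) {α : Y × X × W → ℝ} {β : Y' × Y → ℝ}
    (hα : α ∈ senderSet X W Y) (hβ : β ∈ receiverSet Y' Y) :
    zeta p (composePolicy β α) ≤ zeta p α := by
  have hα0 : ∀ t, 0 ≤ α t := fun t => (hα.1 t).1
  simp only [zeta_eq_sum_divergence, Pyw_composePolicy, Py_composePolicy,
    ← pushforward_mul_const]
  refine sum_le_sum fun w _ => divergence_pushforward_le (fun t => (hβ.1 t).1) hβ.2
    (fun y => Pyw_nonneg hp hα0 y w)
    (fun y => mul_nonneg (Py_nonneg hp hα0 y) (qW_nonneg hp w)) fun y h => ?_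
  refine le_antisymm ?_ (Pyw_nonneg hp hα0 y w)
  rcases mul_eq_zero.1 h with h | h
  · exact h ▸ Pyw_le_Py hp hα0 y w
  · exact h ▸ Pyw_le_qW hp (fun t => (hα.1 t).2) y w

theorem xi_composePolicy_id [Fintype W] [DecidableEq X] (d : X × X → ℝ) (p : X × X × W → ℝ)
    (α : Y × X × W → ℝ) (β : X × Y → ℝ) :
    xi d p (composePolicy β α) (fun t => if t.1 = t.2 then 1 else 0) = xi d p α β := by
  simp only [xi, composePolicy, pushforward, mul_ite, mul_one, mul_zero, ite_mul, zero_mul,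
    sum_ite_irrel, sum_const_zero, sum_ite_eq, mem_univ, if_true, mul_sum, sum_mul, mul_assoc]
  exact sum_congr rfl fun _ _ => sum_congr rfl fun _ _ =>
    (sum_congr rfl fun _ _ => sum_comm).trans sum_comm

end Composition

variable {X W : Type*} [Fintype X] [Fintype W]

theorem composed_policy_data_processing_general [DecidableEq X]
    (p : X × X × W → ℝ) (hp0 : ∀ t, 0 ≤ p t)
    (d : X × X → ℝ)
    (β' : X × X → ℝ) (hβ' : ∀ t, β' t = if t.1 = t.2 then 1 else 0)
    (α : X × X × W → ℝ) (hα : α ∈ senderSet X W X)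
    (β : X × X → ℝ) (hβ : β ∈ receiverSet X X)
    (γ : X × X × W → ℝ) (hγ : ∀ x' z w, γ (x', z, w) = ∑ y, β (x', y) * α (y, z, w)) :
    γ ∈ senderSet X W X ∧ xi d p γ β' = xi d p α β ∧ zeta p γ ≤ zeta p α := by
  obtain rfl : γ = composePolicy β α := funext fun ⟨x', z, w⟩ => hγ x' z w
  obtain rfl : β' = fun t => if t.1 = t.2 then 1 else 0 := funext hβ'
  exact ⟨composePolicy_mem_senderSet hα hβ, xi_composePolicy_id d p α β,
    zeta_composePolicy_le hp0 hα hβ⟩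

/-- with `𝒴 = 𝒳` and the identity receiver policy `β'`, the composed
policy `γ(x̂, z, w) = ∑_y β(x̂, y) α(y, z, w)` is a valid sender policy, it yields the
same expected distortion (`ξ(γ, β') = ξ(α, β)`), and it leaks no more information
(`ζ(γ) ≤ ζ(α)`): a data-processing inequality. -/
theorem composed_policy_data_processing [Nonempty X] [Nonempty W] [DecidableEq X]
    (p : X × X × W → ℝ) (hp0 : ∀ t, 0 ≤ p t)
    (hp1 : ∑ x, ∑ z, ∑ w, p (x, z, w) = 1)
    (d : X × X → ℝ) (hd : ∀ t, 0 ≤ d t)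
    (β' : X × X → ℝ) (hβ' : ∀ t, β' t = if t.1 = t.2 then 1 else 0)
    (α : X × X × W → ℝ) (hα : α ∈ senderSet X W X)
    (β : X × X → ℝ) (hβ : β ∈ receiverSet X X)
    (γ : X × X × W → ℝ) (hγ : ∀ x' z w, γ (x', z, w) = ∑ y, β (x', y) * α (y, z, w)) :
    γ ∈ senderSet X W X ∧ xi d p γ β' = xi d p α β ∧ zeta p γ ≤ zeta p α :=
  composed_policy_data_processing_general p hp0 d β' hβ' α hα β hβ γ hγ
end

section
/- Let (α^k,β^k)_{k≥0} be a best-response trajectory. For every ε > 0 there exists K_ε ∈ ℕ such that (α^k,β^k) ∈ 𝒩_ε for all k ≥ K_ε; that is, the best-response dynamics reaches and remains in the set of ε-Nash equilibria after finitely many iterations. -/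
open Finset

noncomputable section

variable {X W Y : Type*} [Fintype X] [Fintype W] [Fintype Y]

/-- A best-response trajectory (Algorithm 1): at odd steps the receiver best-responds
(and the sender keeps her policy), at even steps `k ≥ 2` the sender best-responds
(and the receiver keeps her policy). -/
def IsBRTraj (d : X × X → ℝ) (p : X × X × W → ℝ) (ρ : ℝ)
    (αs : ℕ → Y × X × W → ℝ) (βs : ℕ → X × Y → ℝ) : Prop :=
  αs 0 ∈ senderSet X W Y ∧ βs 0 ∈ receiverSet X Y ∧
    (∀ k, 1 ≤ k → Odd k →
      βs k ∈ receiverSet X Y ∧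
      (∀ β ∈ receiverSet X Y, Vcost d p (αs (k - 1)) (βs k) ≤ Vcost d p (αs (k - 1)) β) ∧
      αs k = αs (k - 1)) ∧
    (∀ k, 2 ≤ k → Even k →
      αs k ∈ senderSet X W Y ∧
      (∀ α ∈ senderSet X W Y,
        Ucost d p ρ (αs k) (βs (k - 1)) ≤ Ucost d p ρ α (βs (k - 1))) ∧
      βs k = βs (k - 1))

/-! The game has the exact potential `Ψ = ξ + ρζ`: `U = Ψ`, and `V = Ψ - ρζ(α)` differs from `Ψ`
by a term that does not depend on the receiver's policy. Hence no best-response step increases `Ψ`.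
Since `ξ ≥ 0` and the mutual information `ζ` is nonnegative, `Ψ` converges along the trajectory
and its one-step decrements tend to `0`. At step `k ≥ 1`, the gap of each player to a best
response is at most the decrement `Ψₖ - Ψₖ₊₁`: for the player moving at step `k + 1` it is her
gain in that move, and the other one has just best-responded. -/

open Filter Topology

lemma Filter.Tendsto.sub_succ {G : Type*} [AddCommGroup G] [TopologicalSpace G]
    [IsTopologicalAddGroup G] {f : ℕ → G} {a : G} (h : Tendsto f atTop (𝓝 a)) :
    Tendsto (fun n => f n - f (n + 1)) atTop (𝓝 0) := by
  simpa using h.sub (h.comp (tendsto_add_atTop_nat 1))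

lemma Real.sub_le_mul_log_div {t a : ℝ} (ht : 0 < t) (ha : 0 < a) :
    t - a ≤ t * Real.log (t / a) := by
  have h := Real.one_sub_inv_le_log_of_pos (div_pos ht ha)
  rw [inv_div] at h
  calc t - a = t * (1 - a / t) := by field_simp
    _ ≤ t * Real.log (t / a) := mul_le_mul_of_nonneg_left h ht.le

section Potential

variable {d : X × X → ℝ} {p : X × X × W → ℝ} {ρ : ℝ} {α : Y × X × W → ℝ} {β : X × Y → ℝ}

lemma Psi_eq_Ucost : Psi d p ρ α β = Ucost d p ρ α β := rfl

lemma Psi_eq_Vcost_add : Psi d p ρ α β = Vcost d p α β + ρ * zeta p α := rfl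

lemma xi_nonneg (hd : ∀ t, 0 ≤ d t) (hp0 : ∀ t, 0 ≤ p t) (hα : ∀ t, 0 ≤ α t)
    (hβ : ∀ t, 0 ≤ β t) : 0 ≤ xi d p α β :=
  sum_nonneg fun _ _ => sum_nonneg fun _ _ => sum_nonneg fun _ _ => sum_nonneg fun _ _ =>
    sum_nonneg fun _ _ => mul_nonneg (mul_nonneg (mul_nonneg (hd _) (hβ _)) (hα _)) (hp0 _)

lemma sum_qW (hp1 : ∑ x, ∑ z, ∑ w, p (x, z, w) = 1) : ∑ w, qW p w = 1 := by
  simp only [qW]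
  rw [← hp1, sum_comm]
  conv_rhs => rw [sum_comm]
  exact sum_congr rfl fun z _ => sum_comm

lemma zeta_nonneg (hp0 : ∀ t, 0 ≤ p t) (hp1 : ∑ x, ∑ z, ∑ w, p (x, z, w) = 1)
    (hα : ∀ t, 0 ≤ α t ∧ α t ≤ 1) : 0 ≤ zeta p α := by
  have hPyw0 (y : Y) (w : W) : 0 ≤ Pyw p α y w :=
    sum_nonneg fun _ _ => sum_nonneg fun _ _ => mul_nonneg (hα _).1 (hp0 _)
  have hPyw_le_Py (y : Y) (w : W) : Pyw p α y w ≤ Py p α y :=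
    single_le_sum (fun w _ => hPyw0 y w) (mem_univ w)
  have hPyw_le_qW (y : Y) (w : W) : Pyw p α y w ≤ qW p w :=
    sum_le_sum fun _ _ => sum_le_sum fun _ _ => mul_le_of_le_one_left (hp0 _) (hα _).2
  have hq0 (w : W) : 0 ≤ qW p w := sum_nonneg fun _ _ => sum_nonneg fun _ _ => hp0 _
  have hterm (y : Y) (w : W) : Pyw p α y w - Py p α y * qW p w ≤
      Pyw p α y w * Real.log (Pyw p α y w / (Py p α y * qW p w)) := by
    rcases (hPyw0 y w).eq_or_lt with h0 | hpos
    · rw [← h0, zero_mul, zero_sub, neg_nonpos]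
      exact mul_nonneg (sum_nonneg fun w _ => hPyw0 y w) (hq0 w)
    · exact Real.sub_le_mul_log_div hpos <|
        mul_pos (hpos.trans_le (hPyw_le_Py y w)) (hpos.trans_le (hPyw_le_qW y w))
  -- Gibbs' inequality: for each `y`, the lower bounds `Pyw - Py * qW` sum over `w` to `0`.
  calc (0 : ℝ) = ∑ y, ∑ w, (Pyw p α y w - Py p α y * qW p w) := by
        simp only [sum_sub_distrib, ← mul_sum, sum_qW hp1, mul_one, Py, sub_self, sum_const_zero]
    _ ≤ zeta p α := sum_le_sum fun y _ => sum_le_sum fun w _ => hterm y w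

lemma Psi_nonneg (hd : ∀ t, 0 ≤ d t) (hp0 : ∀ t, 0 ≤ p t)
    (hp1 : ∑ x, ∑ z, ∑ w, p (x, z, w) = 1) (hρ : 0 ≤ ρ) (hα : α ∈ senderSet X W Y)
    (hβ : β ∈ receiverSet X Y) : 0 ≤ Psi d p ρ α β :=
  add_nonneg (xi_nonneg hd hp0 (fun t => (hα.1 t).1) (fun t => (hβ.1 t).1))
    (mul_nonneg hρ (zeta_nonneg hp0 hp1 hα.1))

end Potential

namespace IsBRTraj

variable {d : X × X → ℝ} {p : X × X × W → ℝ} {ρ : ℝ}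
  {αs : ℕ → Y × X × W → ℝ} {βs : ℕ → X × Y → ℝ}

lemma receiver_succ (h : IsBRTraj d p ρ αs βs) {k : ℕ} (hk : Even k) :
    βs (k + 1) ∈ receiverSet X Y ∧
      (∀ β ∈ receiverSet X Y, Vcost d p (αs k) (βs (k + 1)) ≤ Vcost d p (αs k) β) ∧
      αs (k + 1) = αs k :=
  h.2.2.1 (k + 1) (by omega) hk.add_one

lemma sender_succ (h : IsBRTraj d p ρ αs βs) {k : ℕ} (hk : Odd k) :
    αs (k + 1) ∈ senderSet X W Y ∧
      (∀ α ∈ senderSet X W Y, Ucost d p ρ (αs (k + 1)) (βs k) ≤ Ucost d p ρ α (βs k)) ∧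
      βs (k + 1) = βs k :=
  h.2.2.2 (k + 1) (by obtain ⟨j, rfl⟩ := hk; omega) hk.add_one

lemma mem (h : IsBRTraj d p ρ αs βs) : ∀ k, αs k ∈ senderSet X W Y ∧ βs k ∈ receiverSet X Y
  | 0 => ⟨h.1, h.2.1⟩
  | k + 1 => by
    obtain ⟨hα, hβ⟩ := h.mem k
    rcases k.even_or_odd with hk | hk
    · obtain ⟨hβ', -, hα'⟩ := h.receiver_succ hk
      exact ⟨hα' ▸ hα, hβ'⟩
    · obtain ⟨hα', -, hβ'⟩ := h.sender_succ hk
      exact ⟨hα', hβ' ▸ hβ⟩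

lemma psi_succ_le (h : IsBRTraj d p ρ αs βs) (k : ℕ) :
    Psi d p ρ (αs (k + 1)) (βs (k + 1)) ≤ Psi d p ρ (αs k) (βs k) := by
  rcases k.even_or_odd with hk | hk
  · obtain ⟨-, hbest, hα⟩ := h.receiver_succ hk
    rw [Psi_eq_Vcost_add, Psi_eq_Vcost_add, hα]
    exact add_le_add_left (hbest _ (h.mem k).2) _
  · obtain ⟨-, hbest, hβ⟩ := h.sender_succ hk
    rw [hβ]
    exact hbest _ (h.mem k).1

lemma sender_gap_le_drop (h : IsBRTraj d p ρ αs βs) {k : ℕ} (hk : 1 ≤ k)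
    {α' : Y × X × W → ℝ} (hα' : α' ∈ senderSet X W Y) :
    Ucost d p ρ (αs k) (βs k) - Ucost d p ρ α' (βs k) ≤
      Psi d p ρ (αs k) (βs k) - Psi d p ρ (αs (k + 1)) (βs (k + 1)) := by
  have hdrop := h.psi_succ_le k
  rcases k.even_or_odd with hk' | hk'
  · obtain ⟨j, rfl⟩ := Nat.exists_eq_add_of_le' hk
    have hj : Odd j := Nat.not_even_iff_odd.mp (Nat.even_add_one.mp hk')
    obtain ⟨-, hbest, hβ⟩ := h.sender_succ hj
    have := hbest α' hα'
    rw [← hβ] at this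
    linarith
  · obtain ⟨-, hbest, hβ⟩ := h.sender_succ hk'
    have := hbest α' hα'
    rw [hβ, Psi_eq_Ucost, Psi_eq_Ucost]
    linarith

lemma receiver_gap_le_drop (h : IsBRTraj d p ρ αs βs) (k : ℕ)
    {β' : X × Y → ℝ} (hβ' : β' ∈ receiverSet X Y) :
    Vcost d p (αs k) (βs k) - Vcost d p (αs k) β' ≤
      Psi d p ρ (αs k) (βs k) - Psi d p ρ (αs (k + 1)) (βs (k + 1)) := by
  have hdrop := h.psi_succ_le k
  rcases k.even_or_odd with hk | hk
  · obtain ⟨-, hbest, hα⟩ := h.receiver_succ hk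
    have := hbest β' hβ'
    rw [Psi_eq_Vcost_add, Psi_eq_Vcost_add, hα]
    linarith
  · obtain ⟨j, rfl⟩ := hk
    obtain ⟨-, hbest, hα⟩ := h.receiver_succ (even_two_mul j)
    have := hbest β' hβ'
    rw [← hα] at this
    linarith

lemma isEpsNash_of_drop_le (h : IsBRTraj d p ρ αs βs) {k : ℕ} (hk : 1 ≤ k) {ε : ℝ}
    (hε : Psi d p ρ (αs k) (βs k) - Psi d p ρ (αs (k + 1)) (βs (k + 1)) ≤ ε) :
    IsEpsNash d p ρ ε (αs k) (βs k) :=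
  ⟨(h.mem k).1, (h.mem k).2,
    fun _ hα' => by linarith [h.sender_gap_le_drop hk hα'],
    fun _ hβ' => by linarith [h.receiver_gap_le_drop k hβ']⟩

end IsBRTraj

theorem best_response_reaches_eps_nash_general
    (p : X × X × W → ℝ) (hp0 : ∀ t, 0 ≤ p t)
    (hp1 : ∑ x, ∑ z, ∑ w, p (x, z, w) = 1)
    (d : X × X → ℝ) (hd : ∀ t, 0 ≤ d t)
    (ρ : ℝ) (hρ : 0 ≤ ρ)
    (αs : ℕ → Y × X × W → ℝ) (βs : ℕ → X × Y → ℝ)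
    (htraj : IsBRTraj d p ρ αs βs) :
    ∀ ε : ℝ, 0 < ε → ∃ K : ℕ, ∀ k, K ≤ k → IsEpsNash d p ρ ε (αs k) (βs k) := by
  intro ε hε
  have hbdd : BddBelow (Set.range fun k => Psi d p ρ (αs k) (βs k)) := by
    refine ⟨0, ?_⟩
    rintro _ ⟨k, rfl⟩
    exact Psi_nonneg hd hp0 hp1 hρ (htraj.mem k).1 (htraj.mem k).2
  have hconv := tendsto_atTop_ciInf (antitone_nat_of_succ_le htraj.psi_succ_le) hbdd
  obtain ⟨K, hK⟩ := eventually_atTop.mp (hconv.sub_succ.eventually_lt_const hε)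
  exact ⟨K + 1, fun k hk => htraj.isEpsNash_of_drop_le (by omega) (hK k (by omega)).le⟩

/-- for every `ε > 0`, any best-response trajectory reaches and remains in
the set of `ε`-Nash equilibria after finitely many iterations. -/
theorem best_response_reaches_eps_nash [Nonempty X] [Nonempty W] [Nonempty Y]
    (p : X × X × W → ℝ) (hp0 : ∀ t, 0 ≤ p t)
    (hp1 : ∑ x, ∑ z, ∑ w, p (x, z, w) = 1)
    (d : X × X → ℝ) (hd : ∀ t, 0 ≤ d t)
    (ρ : ℝ) (hρ : 0 ≤ ρ)
    (αs : ℕ → Y × X × W → ℝ) (βs : ℕ → X × Y → ℝ)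
    (htraj : IsBRTraj d p ρ αs βs) :
    ∀ ε : ℝ, 0 < ε → ∃ K : ℕ, ∀ k, K ≤ k → IsEpsNash d p ρ ε (αs k) (βs k) :=
  best_response_reaches_eps_nash_general p hp0 hp1 d hd ρ hρ αs βs htraj
end
end
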